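/- Let r be a positive integer, 𝕂 a field containing a primitive r-th root of unity z, and G a simple graph on vertex set {1,…,ℓ} with an edge e = {i₁,i₂}. Let G∖e be the graph obtained by deleting the edge e, and let G/e be the simple graph on {1,…,ℓ}∖{i₂} whose edges are the sets σ(f) of cardinality 2, for f an edge of G, where σ fixes every point except that it sends i₂ to i₁. Then for every integer t, χ(M(G,r), t) = χ(M(G∖e,r), t) − r·χ(M(G/e,r), t). -/
import Mathlib


open Finset
open scoped Classical

/-- The characteristic polynomial of a finite set of (hyper)planes, evaluated at an
integer `t`:  `χ(A,t) = Σ_{I ⊆ A} (−1)^{|I|} t^{dim ∩_{H ∈ I} H}`, the empty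
intersection being the whole space. -/
noncomputable def chi {K V : Type} [Field K] [Fintype V]
    (A : Finset (Submodule K (V → K))) (t : ℤ) : ℤ :=
  ∑ I ∈ A.powerset, (-1) ^ I.card * t ^ (Module.finrank K ↥(I.inf id))
/-- The graphic monomial arrangement `M(G,r)`: the hyperplanes `{x_i − z^k x_j = 0}`
for every edge `{i,j}` of `G` and `1 ≤ k ≤ r`, together with the coordinate
hyperplanes `{x_i = 0}`. -/
noncomputable def monArr (K : Type) [Field K] (z : K) (r : ℕ) {V : Type} [Fintype V]
    (G : SimpleGraph V) : Finset (Submodule K (V → K)) :=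
  (Finset.univ.image fun i : V =>
      LinearMap.ker (LinearMap.proj i : (V → K) →ₗ[K] K)) ∪
  (((Finset.univ : Finset (V × V)).filter (fun p => G.Adj p.1 p.2)).biUnion
    (fun p => (Finset.range r).image fun k =>
      LinearMap.ker
        ((LinearMap.proj p.1 : (V → K) →ₗ[K] K) - z ^ (k + 1) • LinearMap.proj p.2)))

set_option linter.unusedSectionVars false
set_option linter.unusedVariables false
set_option maxHeartbeats 1000000

lemma sum_insert_mem_zero {α : Type*} [DecidableEq α] (B : Finset α) (b : α) (hb : b ∈ B)
    (g : Finset α → ℤ) :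
    ∑ I ∈ B.powerset, (-1) ^ I.card * g (insert b I) = 0 := by
  have h : B = insert b (B.erase b) := (Finset.insert_erase hb).symm
  rw [h, Finset.sum_powerset_insert (Finset.notMem_erase b B)]
  have : ∀ I ∈ (B.erase b).powerset,
      (-1 : ℤ) ^ (insert b I).card * g (insert b (insert b I))
        = -((-1) ^ I.card * g (insert b I)) := by
    intro I hI
    have hbI : b ∉ I := fun h' => Finset.notMem_erase b B (Finset.mem_powerset.1 hI h')
    rw [Finset.insert_idem, Finset.card_insert_of_notMem hbI, pow_succ]
    ring
  rw [Finset.sum_congr rfl this, Finset.sum_neg_distrib]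
  ring

-- L1: collapse along image
lemma sum_powerset_image_collapse {α β : Type*} [DecidableEq α] [DecidableEq β]
    (A : Finset α) (f : α → β) (g : Finset β → ℤ) :
    ∑ J ∈ A.powerset, (-1) ^ J.card * g (J.image f)
      = ∑ I ∈ (A.image f).powerset, (-1) ^ I.card * g I := by
  induction A using Finset.induction generalizing g with
  | empty => simp
  | @insert a s ha ih =>
    rw [Finset.sum_powerset_insert ha]
    have step : ∀ J ∈ s.powerset,
        (-1 : ℤ) ^ (insert a J).card * g ((insert a J).image f)
          = -((-1) ^ J.card * g (insert (f a) (J.image f))) := by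
      intro J hJ
      have haJ : a ∉ J := fun h' => ha (Finset.mem_powerset.1 hJ h')
      rw [Finset.card_insert_of_notMem haJ, Finset.image_insert, pow_succ]
      ring
    rw [Finset.sum_congr rfl step, Finset.sum_neg_distrib]
    rw [ih, ih (g := fun I => g (insert (f a) I))]
    by_cases hfa : f a ∈ s.image f
    · rw [Finset.image_insert, Finset.insert_eq_self.2 hfa,
        sum_insert_mem_zero _ _ hfa]
      ring
    · rw [Finset.image_insert, Finset.sum_powerset_insert hfa]
      have : ∀ I ∈ (s.image f).powerset,
          (-1 : ℤ) ^ (insert (f a) I).card * g (insert (f a) I)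
            = -((-1) ^ I.card * g (insert (f a) I)) := by
        intro I hI
        have : f a ∉ I := fun h' => hfa (Finset.mem_powerset.1 hI h')
        rw [Finset.card_insert_of_notMem this, pow_succ]; ring
      rw [Finset.sum_congr rfl this, Finset.sum_neg_distrib]

-- L2: powerset of disjoint union
lemma sum_powerset_union_disjoint {α : Type*} [DecidableEq α] {A B : Finset α}
    (hAB : Disjoint A B) (f : Finset α → ℤ) :
    ∑ I ∈ (A ∪ B).powerset, f I
      = ∑ J ∈ A.powerset, ∑ S ∈ B.powerset, f (J ∪ S) := by
  induction B using Finset.induction generalizing f with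
  | empty => simp
  | @insert b B' hb ih =>
    have hbA : b ∉ A := fun h => (Finset.disjoint_left.1 hAB h) (Finset.mem_insert_self b B')
    have hAB' : Disjoint A B' := hAB.mono_right (Finset.subset_insert b B')
    have hbu : b ∉ A ∪ B' := by simp [hbA, hb]
    have : A ∪ insert b B' = insert b (A ∪ B') := by
      ext x; simp [Finset.mem_insert, or_left_comm, or_comm]
    rw [this, Finset.sum_powerset_insert hbu, ih hAB' f, ih hAB' (fun I => f (insert b I))]
    rw [← Finset.sum_add_distrib]
    refine Finset.sum_congr rfl fun J hJ => ?_
    show _ = _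
    rw [Finset.sum_powerset_insert hb, ← Finset.sum_add_distrib]
    rw [← Finset.sum_add_distrib]
    refine Finset.sum_congr rfl fun S hS => ?_
    have h2 : J ∪ insert b S = insert b (J ∪ S) := by
      ext x; simp [Finset.mem_insert, or_left_comm, or_comm]
    rw [h2]

-- L5: split powerset sum by cardinality
lemma sum_powerset_card_split {α : Type*} [DecidableEq α] (E : Finset α) (F : Finset α → ℤ) :
    ∑ S ∈ E.powerset, F S
      = F ∅ + (∑ a ∈ E, F {a})
        + ∑ S ∈ E.powerset.filter (fun S => 2 ≤ S.card), F S := by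
  rw [← Finset.sum_filter_add_sum_filter_not E.powerset (fun S => S.card ≤ 1)]
  congr 1
  · rw [← Finset.sum_filter_add_sum_filter_not (E.powerset.filter (fun S => S.card ≤ 1))
      (fun S => S.card = 0)]
    congr 1
    · have : (E.powerset.filter (fun S => S.card ≤ 1)).filter (fun S => S.card = 0) = {∅} := by
        ext S
        simp only [Finset.mem_filter, Finset.mem_powerset, Finset.mem_singleton,
          Finset.card_eq_zero]
        constructor
        · rintro ⟨⟨-, -⟩, h⟩; exact h
        · rintro rfl; simp
      rw [this, Finset.sum_singleton]
    · have : (E.powerset.filter (fun S => S.card ≤ 1)).filter (fun S => ¬S.card = 0)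
          = E.image fun a => {a} := by
        ext S
        simp only [Finset.mem_filter, Finset.mem_powerset, Finset.mem_image]
        constructor
        · rintro ⟨⟨hS, hc⟩, h0⟩
          have : S.card = 1 := by omega
          obtain ⟨a, rfl⟩ := Finset.card_eq_one.1 this
          exact ⟨a, by simpa using hS, rfl⟩
        · rintro ⟨a, ha, rfl⟩
          simp [Finset.singleton_subset_iff.2 ha]
      rw [this, Finset.sum_image (by intro a _ b _ h; simpa using h)]
  · congr 1; ext S
    simp only [Finset.mem_filter, Finset.mem_powerset]
    constructor
    · rintro ⟨h1, h2⟩; exact ⟨h1, by omega⟩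
    · rintro ⟨h1, h2⟩; exact ⟨h1, by omega⟩

noncomputable def hyp {K : Type*} [Field K] {V : Type*} [Fintype V] (a d : V) (b : K) :
    Submodule K (V → K) :=
  LinearMap.ker ((LinearMap.proj a : (V → K) →ₗ[K] K) - b • LinearMap.proj d)

noncomputable def chyp {K : Type*} [Field K] {V : Type*} [Fintype V] (a : V) :
    Submodule K (V → K) :=
  LinearMap.ker (LinearMap.proj a : (V → K) →ₗ[K] K)

section KerLemmas
variable {K : Type*} [Field K] {V : Type*} [Fintype V] [DecidableEq V]

lemma mem_hyp {a d : V} {b : K} {x : V → K} : x ∈ hyp a d b ↔ x a - b * x d = 0 := by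
  simp [hyp, LinearMap.mem_ker, LinearMap.sub_apply, LinearMap.smul_apply, sub_eq_zero]

lemma mem_chyp {a : V} {x : V → K} : x ∈ chyp a ↔ x a = 0 := by
  simp [chyp, LinearMap.mem_ker]

lemma hyp_swap {a d : V} (had : a ≠ d) {b : K} (hb : b ≠ 0) :
    hyp a d b = hyp d a b⁻¹ := by
  unfold hyp
  have h : (LinearMap.proj d : (V → K) →ₗ[K] K) - b⁻¹ • LinearMap.proj a
      = (-b⁻¹) • ((LinearMap.proj a : (V → K) →ₗ[K] K) - b • LinearMap.proj d) := by
    apply LinearMap.ext; intro x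
    simp only [LinearMap.sub_apply, LinearMap.smul_apply, LinearMap.proj_apply, smul_eq_mul,
      LinearMap.neg_apply]
    linear_combination (-(x d)) * inv_mul_cancel₀ hb
  rw [h, LinearMap.ker_smul _ _ (by simp [hb])]

lemma hyp_smul {a d : V} {c b : K} (hc : c ≠ 0) :
    hyp a d b
      = LinearMap.ker (c • ((LinearMap.proj a : (V → K) →ₗ[K] K) - b • LinearMap.proj d)) := by
  rw [hyp, LinearMap.ker_smul _ _ hc]

lemma hyp_coeff_ne {a d : V} (had : a ≠ d) {b b' : K} (hbb : b ≠ b') :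
    hyp a d b ≠ hyp a d b' := by
  intro h
  have hv : (Pi.single a b + Pi.single d (1:K)) ∈ hyp a d b := by
    rw [mem_hyp]
    simp [Pi.single_apply, had, had.symm]
  rw [h, mem_hyp] at hv
  simp [Pi.single_apply, had, had.symm] at hv
  apply hbb
  linear_combination hv

lemma chyp_ne_hyp {a d : V} (had : a ≠ d) {b : K} (hb : b ≠ 0) (m : V) :
    chyp m ≠ hyp a d b := by
  intro h
  by_cases hm : m = a
  · subst hm
    have hv : (Pi.single d (1:K)) ∈ chyp m := by
      rw [mem_chyp]; simp [Pi.single_apply, had]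
    rw [h, mem_hyp] at hv
    simp [Pi.single_apply, had, had.symm] at hv
    exact hb hv
  · have hv : (Pi.single a (1:K)) ∈ chyp m := by
      rw [mem_chyp]; simp [Pi.single_apply, hm]
    rw [h, mem_hyp] at hv
    simp [Pi.single_apply, had, had.symm] at hv

lemma hyp_eq_pairs {a d a' d' : V} (had : a ≠ d) (ha'd' : a' ≠ d') {b b' : K}
    (hb : b ≠ 0) (hb' : b' ≠ 0) (h : hyp a d b = hyp a' d' b') :
    (a' = a ∨ a' = d) ∧ (d' = a ∨ d' = d) := by
  constructor
  · by_contra hc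
    push_neg at hc
    have hv : (Pi.single a' (1:K)) ∈ hyp a d b := by
      rw [mem_hyp]; simp [Pi.single_apply, hc.1, hc.2]
    rw [h, mem_hyp] at hv
    simp [Pi.single_apply, ha'd', ha'd'.symm] at hv
  · by_contra hc
    push_neg at hc
    have hv : (Pi.single d' (1:K)) ∈ hyp a d b := by
      rw [mem_hyp]; simp [Pi.single_apply, hc.1, hc.2]
    rw [h, mem_hyp] at hv
    simp [Pi.single_apply, ha'd', ha'd'.symm] at hv
    exact hb' hv

lemma hyp_inf_hyp {a d : V} {b b' : K} (hbb : b ≠ b') :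
    hyp a d b ⊓ hyp a d b' = chyp a ⊓ chyp d := by
  ext x
  simp only [Submodule.mem_inf, mem_hyp, mem_chyp]
  constructor
  · rintro ⟨h1, h2⟩
    have h3 : (b' - b) * x d = 0 := by linear_combination h1 - h2
    have hd : x d = 0 := by
      rcases mul_eq_zero.1 h3 with h | h
      · exact absurd (sub_eq_zero.1 h).symm hbb
      · exact h
    have ha : x a = 0 := by linear_combination h1 + b * hd
    exact ⟨ha, hd⟩
  · rintro ⟨h1, h2⟩
    constructor <;> rw [h1, h2] <;> ring

lemma inf_chyp_le_hyp {a d : V} {b : K} : chyp a ⊓ chyp d ≤ hyp a d b := by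
  intro x hx
  rw [Submodule.mem_inf, mem_chyp, mem_chyp] at hx
  rw [mem_hyp, hx.1, hx.2]; ring

end KerLemmas
lemma sum_powerset_sign_mul_zero {α : Type*} [DecidableEq α] (A : Finset α) (a : α) (ha : a ∈ A)
    (g : Finset α → ℤ) (hg : ∀ J, g (insert a J) = g J) :
    ∑ J ∈ A.powerset, (-1) ^ J.card * g J = 0 := by
  have h : A = insert a (A.erase a) := (Finset.insert_erase ha).symm
  rw [h, Finset.sum_powerset_insert (Finset.notMem_erase a A)]
  have hc : ∀ J ∈ (A.erase a).powerset,
      (-1:ℤ) ^ (insert a J).card * g (insert a J) = -((-1) ^ J.card * g J) := by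
    intro J hJ
    have haJ : a ∉ J := fun h' => Finset.notMem_erase a A (Finset.mem_powerset.1 hJ h')
    rw [Finset.card_insert_of_notMem haJ, hg, pow_succ]; ring
  rw [Finset.sum_congr rfl hc, Finset.sum_neg_distrib]; ring

section Exp
variable {K : Type*} [Field K] {r : ℕ} {z : K}

lemma z_ne_zero (hz : IsPrimitiveRoot z r) (hr : 0 < r) : z ≠ 0 := by
  intro h
  have := hz.pow_eq_one
  rw [h, zero_pow hr.ne'] at this
  exact zero_ne_one this

lemma zpow_mod (hz : IsPrimitiveRoot z r) (n : ℕ) : z ^ (n % r) = z ^ n := by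
  conv_rhs => rw [← Nat.div_add_mod n r]
  rw [pow_add, pow_mul, hz.pow_eq_one, one_pow, one_mul]

lemma zpow_solve (hz : IsPrimitiveRoot z r) (hr : 0 < r) (s tt : ℕ) :
    ∃ j, j < r ∧ z ^ (j + s) = z ^ tt := by
  refine ⟨(tt + s * (r - 1)) % r, Nat.mod_lt _ hr, ?_⟩
  have h1 : r - 1 + 1 = r := by omega
  have hsr : s * (r - 1) + s = s * r := by
    calc s * (r-1) + s = s * ((r-1)+1) := by rw [Nat.mul_succ]
    _ = s * r := by rw [h1]
  rw [pow_add, zpow_mod hz, ← pow_add]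
  have h2 : tt + s * (r - 1) + s = tt + r * s := by
    rw [add_assoc, hsr, Nat.mul_comm]
  rw [h2, pow_add, pow_mul, hz.pow_eq_one, one_pow, mul_one]

lemma zpow_succ_inj (hz : IsPrimitiveRoot z r) (hr : 0 < r) {k k' : ℕ}
    (hk : k < r) (hk' : k' < r) (h : z ^ (k + 1) = z ^ (k' + 1)) : k = k' := by
  rw [pow_succ, pow_succ] at h
  exact hz.pow_inj hk hk' (mul_right_cancel₀ (z_ne_zero hz hr) h)

end Exp

lemma comap_finset_inf {K M N : Type*} [Field K] [AddCommGroup M] [Module K M]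
    [AddCommGroup N] [Module K N] (f : M →ₗ[K] N) (T : Finset (Submodule K N)) :
    Submodule.comap f (T.inf id) = T.inf fun P => Submodule.comap f P := by
  induction T using Finset.induction with
  | empty => simp
  | @insert P T hP ih =>
    rw [Finset.inf_insert, Finset.inf_insert, Submodule.comap_inf, ih]
    rfl

lemma finrank_comap_eq {K M N : Type*} [Field K] [AddCommGroup M] [Module K M]
    [AddCommGroup N] [Module K N] {f : M →ₗ[K] N} (hf : Function.Injective f)
    (W : Submodule K N) :
    Module.finrank K (Submodule.comap f W) = Module.finrank K ↥(W ⊓ LinearMap.range f) := by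
  have e := Submodule.equivMapOfInjective f hf (Submodule.comap f W)
  rw [e.finrank_eq, Submodule.map_comap_eq, inf_comm]

lemma mem_monArr {K : Type} [Field K] {V : Type} [Fintype V] {z : K} {r : ℕ}
    {G : SimpleGraph V} {P : Submodule K (V → K)} :
    P ∈ monArr K z r G ↔ (∃ i, P = chyp i) ∨
      ∃ p q k, G.Adj p q ∧ k < r ∧ P = hyp p q (z ^ (k + 1)) := by
  show P ∈ _ ∪ _ ↔ _
  rw [Finset.mem_union]
  apply or_congr
  · simp only [Finset.mem_image, Finset.mem_univ, true_and, chyp]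
    exact ⟨fun ⟨i, h⟩ => ⟨i, h.symm⟩, fun ⟨i, h⟩ => ⟨i, h.symm⟩⟩
  · simp only [Finset.mem_biUnion, Finset.mem_filter, Finset.mem_univ, true_and,
      Finset.mem_image, Finset.mem_range, Prod.exists, hyp]
    constructor
    · rintro ⟨p, q, hpq, k, hk, h⟩
      exact ⟨p, q, k, hpq, hk, h.symm⟩
    · rintro ⟨p, q, k, hpq, hk, h⟩
      exact ⟨p, q, hpq, k, hk, h.symm⟩
section Iota
variable {ℓ : ℕ} {K : Type} [Field K]

noncomputable def iot (i₁ i₂ : Fin ℓ) (hne : i₁ ≠ i₂) (c : K) :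
    ({i : Fin ℓ // i ≠ i₂} → K) →ₗ[K] (Fin ℓ → K) :=
  LinearMap.pi (fun i => if h : i = i₂
    then c • LinearMap.proj (⟨i₁, hne⟩ : {i : Fin ℓ // i ≠ i₂})
    else LinearMap.proj ⟨i, h⟩)

variable {i₁ i₂ : Fin ℓ} (hne : i₁ ≠ i₂) (c : K)

lemma iot_apply (y : {i : Fin ℓ // i ≠ i₂} → K) (i : Fin ℓ) :
    iot i₁ i₂ hne c y i = if h : i = i₂ then c * y ⟨i₁, hne⟩ else y ⟨i, h⟩ := by
  by_cases h : i = i₂ <;>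
    simp [iot, LinearMap.pi_apply, h, LinearMap.smul_apply, LinearMap.proj_apply]

lemma iot_inj : Function.Injective (iot i₁ i₂ hne c) := by
  intro y y' h
  funext i'
  have := congrFun h (i' : Fin ℓ)
  rwa [iot_apply, iot_apply, dif_neg i'.2, dif_neg i'.2] at this

lemma proj_comp_iot (m : Fin ℓ) :
    (LinearMap.proj m : (Fin ℓ → K) →ₗ[K] K) ∘ₗ iot i₁ i₂ hne c
      = if h : m = i₂ then c • LinearMap.proj (⟨i₁, hne⟩ : {i : Fin ℓ // i ≠ i₂})
        else LinearMap.proj ⟨m, h⟩ :=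
  LinearMap.proj_pi _ m

lemma range_iot {b : K} (hcb : c * b = 1) :
    LinearMap.range (iot i₁ i₂ hne c) = hyp i₁ i₂ b := by
  ext x
  constructor
  · rintro ⟨y, rfl⟩
    rw [mem_hyp, iot_apply, iot_apply, dif_neg hne, dif_pos rfl]
    have : b * (c * y ⟨i₁, hne⟩) = y ⟨i₁, hne⟩ := by
      rw [← mul_assoc, mul_comm b c, hcb, one_mul]
    rw [this, sub_self]
  · intro hx
    rw [mem_hyp, sub_eq_zero] at hx
    refine ⟨fun i' => x ↑i', ?_⟩
    funext i
    rw [iot_apply]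
    by_cases h : i = i₂
    · subst h
      rw [dif_pos rfl]
      rw [hx, ← mul_assoc, hcb, one_mul]
    · rw [dif_neg h]

lemma comap_iot_chyp {m : Fin ℓ} (hm : m ≠ i₂) :
    Submodule.comap (iot i₁ i₂ hne c) (chyp m) = chyp (⟨m, hm⟩ : {i : Fin ℓ // i ≠ i₂}) := by
  rw [chyp, ← LinearMap.ker_comp, proj_comp_iot, dif_neg hm, chyp]

lemma comap_iot_chyp_i₂ (hc : c ≠ 0) :
    Submodule.comap (iot i₁ i₂ hne c) (chyp i₂)
      = chyp (⟨i₁, hne⟩ : {i : Fin ℓ // i ≠ i₂}) := by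
  rw [chyp, ← LinearMap.ker_comp, proj_comp_iot, dif_pos rfl, LinearMap.ker_smul _ _ hc, chyp]

lemma comap_iot_hyp {p q : Fin ℓ} (hp : p ≠ i₂) (hq : q ≠ i₂) (b : K) :
    Submodule.comap (iot i₁ i₂ hne c) (hyp p q b)
      = hyp (⟨p, hp⟩ : {i : Fin ℓ // i ≠ i₂}) ⟨q, hq⟩ b := by
  rw [hyp, ← LinearMap.ker_comp, LinearMap.sub_comp, LinearMap.smul_comp,
    proj_comp_iot, proj_comp_iot, dif_neg hp, dif_neg hq, hyp]

lemma comap_iot_hyp_right {p : Fin ℓ} (hp : p ≠ i₂) (b : K) :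
    Submodule.comap (iot i₁ i₂ hne c) (hyp p i₂ b)
      = hyp (⟨p, hp⟩ : {i : Fin ℓ // i ≠ i₂}) ⟨i₁, hne⟩ (b * c) := by
  rw [hyp, ← LinearMap.ker_comp, LinearMap.sub_comp, LinearMap.smul_comp,
    proj_comp_iot, proj_comp_iot, dif_neg hp, dif_pos rfl, smul_smul, hyp]

lemma comap_iot_hyp_left {c' : K} (hcc : c * c' = 1) {q : Fin ℓ} (hq : q ≠ i₂) (b : K) :
    Submodule.comap (iot i₁ i₂ hne c) (hyp i₂ q b)
      = hyp (⟨i₁, hne⟩ : {i : Fin ℓ // i ≠ i₂}) ⟨q, hq⟩ (b * c') := by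
  have hc : c ≠ 0 := left_ne_zero_of_mul_eq_one hcc
  rw [hyp, ← LinearMap.ker_comp, LinearMap.sub_comp, LinearMap.smul_comp,
    proj_comp_iot, proj_comp_iot, dif_pos rfl, dif_neg hq]
  have h : c • LinearMap.proj (⟨i₁, hne⟩ : {i : Fin ℓ // i ≠ i₂})
        - b • (LinearMap.proj (⟨q, hq⟩ : {i : Fin ℓ // i ≠ i₂})
            : ({i : Fin ℓ // i ≠ i₂} → K) →ₗ[K] K)
      = c • (LinearMap.proj (⟨i₁, hne⟩ : {i : Fin ℓ // i ≠ i₂})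
          - (b * c') • LinearMap.proj ⟨q, hq⟩) := by
    rw [smul_sub, smul_smul]
    congr 2
    rw [← mul_assoc, mul_comm c b, mul_assoc, hcc, mul_one]
  rw [h, LinearMap.ker_smul _ _ hc, hyp]

end Iota
section Split
variable {ℓ : ℕ} {K : Type} [Field K] {r : ℕ} {z : K} {G : SimpleGraph (Fin ℓ)} {i₁ i₂ : Fin ℓ}

noncomputable def eset (i₁ i₂ : Fin ℓ) (z : K) (r : ℕ) : Finset (Submodule K (Fin ℓ → K)) :=
  (Finset.range r).image fun k => hyp i₁ i₂ (z ^ (k + 1))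

lemma mem_eset {P : Submodule K (Fin ℓ → K)} :
    P ∈ eset i₁ i₂ z r ↔ ∃ k, k < r ∧ P = hyp i₁ i₂ (z ^ (k + 1)) := by
  simp only [eset, Finset.mem_image, Finset.mem_range]
  constructor
  · rintro ⟨k, hk, h⟩; exact ⟨k, hk, h.symm⟩
  · rintro ⟨k, hk, h⟩; exact ⟨k, hk, h.symm⟩

lemma monArr_split (hz : IsPrimitiveRoot z r) (hr : 0 < r) (hadj : G.Adj i₁ i₂) :
    monArr K z r G = monArr K z r (G.deleteEdges {s(i₁, i₂)}) ∪ eset i₁ i₂ z r := by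
  have hne : i₁ ≠ i₂ := hadj.ne
  have hz0 : z ≠ 0 := z_ne_zero hz hr
  ext P
  rw [Finset.mem_union, mem_monArr, mem_monArr]
  constructor
  · rintro (⟨i, rfl⟩ | ⟨p, q, k, hpq, hk, rfl⟩)
    · exact Or.inl (Or.inl ⟨i, rfl⟩)
    · by_cases hs : s(p, q) = s(i₁, i₂)
      · rcases Sym2.eq_iff.1 hs with ⟨rfl, rfl⟩ | ⟨rfl, rfl⟩
        · exact Or.inr (mem_eset.2 ⟨k, hk, rfl⟩)
        · obtain ⟨j, hj, hpow⟩ := zpow_solve hz hr (k + 2) r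
          have hinv : (z ^ (k + 1))⁻¹ = z ^ (j + 1) := by
            apply inv_eq_of_mul_eq_one_left
            rw [← pow_add]
            have he : j + 1 + (k + 1) = j + (k + 2) := by omega
            rw [he, hpow, hz.pow_eq_one]
          refine Or.inr (mem_eset.2 ⟨j, hj, ?_⟩)
          rw [hyp_swap hpq.ne (pow_ne_zero _ hz0), hinv]
      · refine Or.inl (Or.inr ⟨p, q, k, ?_, hk, rfl⟩)
        rw [SimpleGraph.deleteEdges_adj]
        exact ⟨hpq, by simpa using hs⟩
  · rintro ((⟨i, rfl⟩ | ⟨p, q, k, hpq, hk, rfl⟩) | hP)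
    · exact Or.inl ⟨i, rfl⟩
    · exact Or.inr ⟨p, q, k, (SimpleGraph.deleteEdges_adj.1 hpq).1, hk, rfl⟩
    · rcases mem_eset.1 hP with ⟨k, hk, rfl⟩
      exact Or.inr ⟨i₁, i₂, k, hadj, hk, rfl⟩

lemma disjoint_eset (hz : IsPrimitiveRoot z r) (hr : 0 < r) (hne : i₁ ≠ i₂) :
    Disjoint (monArr K z r (G.deleteEdges {s(i₁, i₂)})) (eset i₁ i₂ z r) := by
  rw [Finset.disjoint_right]
  rintro P hP hPm
  rcases mem_eset.1 hP with ⟨k, hk, rfl⟩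
  have hz0 : z ≠ 0 := z_ne_zero hz hr
  have hzk : z ^ (k + 1) ≠ 0 := pow_ne_zero _ hz0
  rcases mem_monArr.1 hPm with ⟨i, h⟩ | ⟨p, q, j, hpq, hj, h⟩
  · exact chyp_ne_hyp hne hzk i h.symm
  · rw [SimpleGraph.deleteEdges_adj] at hpq
    obtain ⟨hGpq, hsne⟩ := hpq
    have hpairs := hyp_eq_pairs hne hGpq.ne hzk (pow_ne_zero _ hz0) h
    apply hsne
    simp only [Set.mem_singleton_iff]
    rcases hpairs with ⟨hp | hp, hq | hq⟩
    · exact absurd (hp.trans hq.symm) hGpq.ne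
    · rw [hp, hq]
    · rw [hp, hq, Sym2.eq_swap]
    · exact absurd (hp.trans hq.symm) hGpq.ne

lemma eset_injOn (hz : IsPrimitiveRoot z r) (hr : 0 < r) (hne : i₁ ≠ i₂) :
    ∀ k ∈ Finset.range r, ∀ k' ∈ Finset.range r,
      hyp i₁ i₂ (z ^ (k + 1) : K) = hyp i₁ i₂ (z ^ (k' + 1)) → k = k' := by
  intro k hk k' hk' h
  refine zpow_succ_inj hz hr (Finset.mem_range.1 hk) (Finset.mem_range.1 hk') ?_
  by_contra hzz
  exact hyp_coeff_ne hne hzz h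

lemma eset_card (hz : IsPrimitiveRoot z r) (hr : 0 < r) (hne : i₁ ≠ i₂) :
    (eset i₁ i₂ z r : Finset (Submodule K (Fin ℓ → K))).card = r := by
  rw [eset, Finset.card_image_of_injOn, Finset.card_range]
  intro k hk k' hk' h
  exact eset_injOn hz hr hne k hk k' hk' h

lemma inf_eset_eq (hz : IsPrimitiveRoot z r) (hr : 0 < r) (hne : i₁ ≠ i₂)
    {S : Finset (Submodule K (Fin ℓ → K))} (hS : S ⊆ eset i₁ i₂ z r) (h2 : 2 ≤ S.card) :
    S.inf id = chyp i₁ ⊓ chyp i₂ := by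
  obtain ⟨P, hP, Q, hQ, hPQ⟩ := Finset.one_lt_card.1 h2
  obtain ⟨k, hk, rfl⟩ := mem_eset.1 (hS hP)
  obtain ⟨k', hk', rfl⟩ := mem_eset.1 (hS hQ)
  have hbb : (z ^ (k + 1) : K) ≠ z ^ (k' + 1) := fun h => hPQ (by rw [h])
  apply le_antisymm
  · rw [← hyp_inf_hyp hbb]
    exact le_inf (Finset.inf_le hP) (Finset.inf_le hQ)
  · apply Finset.le_inf
    intro R hR
    obtain ⟨m, hm, rfl⟩ := mem_eset.1 (hS hR)
    exact inf_chyp_le_hyp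

end Split

section ImageComap
variable {ℓ : ℕ} {K : Type} [Field K] {r : ℕ} {z : K} {G : SimpleGraph (Fin ℓ)} {i₁ i₂ : Fin ℓ}

lemma image_comap (hz : IsPrimitiveRoot z r) (hr : 0 < r) (hadj : G.Adj i₁ i₂)
    (hne : i₁ ≠ i₂) {k : ℕ} (hk : k < r) :
    (monArr K z r (G.deleteEdges {s(i₁, i₂)})).image
        (Submodule.comap (iot i₁ i₂ hne (z ^ (r - k - 1))))
      = monArr K z r (SimpleGraph.fromRel
          fun a b : {i : Fin ℓ // i ≠ i₂} =>
            G.Adj ↑a ↑b ∨ ((a : Fin ℓ) = i₁ ∧ G.Adj i₂ ↑b)) := by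
  have hz0 : z ≠ 0 := z_ne_zero hz hr
  have hc0 : (z : K) ^ (r - k - 1) ≠ 0 := pow_ne_zero _ hz0
  have hcc : (z : K) ^ (r - k - 1) * z ^ (k + 1) = 1 := by
    rw [← pow_add]
    have he : r - k - 1 + (k + 1) = r := by omega
    rw [he, hz.pow_eq_one]
  ext P
  rw [Finset.mem_image, mem_monArr]
  constructor
  · rintro ⟨Q, hQ, rfl⟩
    rcases mem_monArr.1 hQ with ⟨i, rfl⟩ | ⟨p, q, j, hpq, hj, rfl⟩
    · by_cases hi : i = i₂
      · subst hi
        rw [comap_iot_chyp_i₂ hne _ hc0]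
        exact Or.inl ⟨_, rfl⟩
      · rw [comap_iot_chyp hne _ hi]
        exact Or.inl ⟨_, rfl⟩
    · rw [SimpleGraph.deleteEdges_adj] at hpq
      obtain ⟨hGpq, hsne⟩ := hpq
      simp only [Set.mem_singleton_iff] at hsne
      have hpq' : p ≠ q := hGpq.ne
      by_cases hp2 : p = i₂
      · have hq2 : q ≠ i₂ := fun h => hpq' (hp2.trans h.symm)
        have hq1 : q ≠ i₁ := fun h => hsne (by rw [hp2, h, Sym2.eq_swap])
        rw [hp2, comap_iot_hyp_left hne _ hcc hq2]
        right
        obtain ⟨m, hm, hpow⟩ := zpow_solve hz hr 1 (j + 1 + (k + 1))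
        refine ⟨⟨i₁, hne⟩, ⟨q, hq2⟩, m, ?_, hm, ?_⟩
        · rw [SimpleGraph.fromRel_adj]
          refine ⟨fun h => hq1 (congrArg Subtype.val h).symm, Or.inl (Or.inr ⟨rfl, hp2 ▸ hGpq⟩)⟩
        · rw [← pow_add, ← hpow]
      · by_cases hq2 : q = i₂
        · have hp1 : p ≠ i₁ := fun h => hsne (by rw [hq2, h])
          rw [hq2, comap_iot_hyp_right hne _ hp2]
          right
          obtain ⟨m, hm, hpow⟩ := zpow_solve hz hr 1 (j + 1 + (r - k - 1))
          refine ⟨⟨p, hp2⟩, ⟨i₁, hne⟩, m, ?_, hm, ?_⟩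
          · rw [SimpleGraph.fromRel_adj]
            refine ⟨fun h => hp1 (congrArg Subtype.val h), Or.inr (Or.inr ⟨rfl, hq2 ▸ hGpq.symm⟩)⟩
          · rw [← pow_add, ← hpow]
        · rw [comap_iot_hyp hne _ hp2 hq2]
          right
          refine ⟨⟨p, hp2⟩, ⟨q, hq2⟩, j, ?_, hj, rfl⟩
          rw [SimpleGraph.fromRel_adj]
          exact ⟨fun h => hpq' (congrArg Subtype.val h), Or.inl (Or.inl hGpq)⟩
  · rintro (⟨a, rfl⟩ | ⟨a, b, m, hab, hm, rfl⟩)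
    · refine ⟨chyp (a : Fin ℓ), mem_monArr.2 (Or.inl ⟨(a : Fin ℓ), rfl⟩), ?_⟩
      rw [comap_iot_chyp hne _ a.2]
    · rw [SimpleGraph.fromRel_adj] at hab
      obtain ⟨habne, hrel⟩ := hab
      have hvne : (a : Fin ℓ) ≠ (b : Fin ℓ) := fun h => habne (Subtype.ext h)
      have hsym : ∀ u v : {i : Fin ℓ // i ≠ i₂}, (u : Fin ℓ) ≠ (v : Fin ℓ) →
          G.Adj ↑u ↑v → s((u : Fin ℓ), (v : Fin ℓ)) ≠ s(i₁, i₂) := by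
        intro u v huv hG hs
        rcases Sym2.eq_iff.1 hs with ⟨h1, h2⟩ | ⟨h1, h2⟩
        · exact v.2 h2
        · exact u.2 h1
      rcases hrel with (hGab | ⟨ha1, hGb⟩) | (hGba | ⟨hb1, hGa⟩)
      · refine ⟨hyp (a : Fin ℓ) (b : Fin ℓ) (z ^ (m + 1)), ?_, ?_⟩
        · refine mem_monArr.2 (Or.inr ⟨↑a, ↑b, m, ?_, hm, rfl⟩)
          rw [SimpleGraph.deleteEdges_adj]
          exact ⟨hGab, by simpa using hsym a b hvne hGab⟩
        · rw [comap_iot_hyp hne _ a.2 b.2]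
      · -- a = i₁', G.Adj i₂ ↑b
        have ha' : a = ⟨i₁, hne⟩ := Subtype.ext ha1
        obtain ⟨j, hj, hpow⟩ := zpow_solve hz hr (k + 2) (m + 1)
        refine ⟨hyp i₂ (b : Fin ℓ) (z ^ (j + 1)), ?_, ?_⟩
        · refine mem_monArr.2 (Or.inr ⟨i₂, ↑b, j, ?_, hj, rfl⟩)
          rw [SimpleGraph.deleteEdges_adj]
          refine ⟨hGb, ?_⟩
          simp only [Set.mem_singleton_iff]
          intro hs
          rcases Sym2.eq_iff.1 hs with ⟨h1, h2⟩ | ⟨h1, h2⟩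
          · exact hne h1.symm
          · exact hvne (ha1.trans h2.symm)
        · rw [comap_iot_hyp_left hne _ hcc b.2, ← pow_add, ha']
          have he : j + 1 + (k + 1) = j + (k + 2) := by omega
          rw [he, hpow]
      · refine ⟨hyp (a : Fin ℓ) (b : Fin ℓ) (z ^ (m + 1)), ?_, ?_⟩
        · refine mem_monArr.2 (Or.inr ⟨↑a, ↑b, m, ?_, hm, rfl⟩)
          rw [SimpleGraph.deleteEdges_adj]
          exact ⟨hGba.symm, by simpa using hsym a b hvne hGba.symm⟩
        · rw [comap_iot_hyp hne _ a.2 b.2]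
      · -- b = i₁', G.Adj i₂ ↑a
        have hb' : b = ⟨i₁, hne⟩ := Subtype.ext hb1
        obtain ⟨j, hj, hpow⟩ := zpow_solve hz hr (r - k) (m + 1)
        refine ⟨hyp (a : Fin ℓ) i₂ (z ^ (j + 1)), ?_, ?_⟩
        · refine mem_monArr.2 (Or.inr ⟨↑a, i₂, j, ?_, hj, rfl⟩)
          rw [SimpleGraph.deleteEdges_adj]
          refine ⟨hGa.symm, ?_⟩
          simp only [Set.mem_singleton_iff]
          intro hs
          rcases Sym2.eq_iff.1 hs with ⟨h1, h2⟩ | ⟨h1, h2⟩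
          · exact hvne (h1.trans hb1.symm)
          · exact a.2 h1
        · rw [comap_iot_hyp_right hne _ a.2, ← pow_add, hb']
          have he : j + 1 + (r - k - 1) = j + (r - k) := by omega
          rw [he, hpow]

end ImageComap

/-- deletion-contraction for graphic monomial arrangements.
For an edge `e = {i₁,i₂}` of `G`,
`χ(M(G,r), t) = χ(M(G∖e,r), t) − r·χ(M(G/e,r), t)`, where `G/e` is the graph on
`{1,…,ℓ}∖{i₂}` whose edges are the 2-element images `σ(f)` of edges `f` of `G`
under the map `σ` sending `i₂` to `i₁` and fixing everything else. -/
theorem stmt10 (ℓ : ℕ) (K : Type) [Field K] (r : ℕ) (hr : 0 < r)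
    (z : K) (hz : IsPrimitiveRoot z r)
    (G : SimpleGraph (Fin ℓ)) (i₁ i₂ : Fin ℓ) (hadj : G.Adj i₁ i₂) (t : ℤ) :
    chi (monArr K z r G) t
      = chi (monArr K z r (G.deleteEdges {s(i₁, i₂)})) t
        - (r : ℤ) *
          chi (monArr K z r (SimpleGraph.fromRel
            fun a b : {i : Fin ℓ // i ≠ i₂} =>
              G.Adj ↑a ↑b ∨ ((a : Fin ℓ) = i₁ ∧ G.Adj i₂ ↑b))) t := by
  have hne : i₁ ≠ i₂ := hadj.ne
  have hz0 : z ≠ 0 := z_ne_zero hz hr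
  set A' : Finset (Submodule K (Fin ℓ → K)) := monArr K z r (G.deleteEdges {s(i₁, i₂)}) with hA'
  set CArr : Finset (Submodule K ({i : Fin ℓ // i ≠ i₂} → K)) :=
    monArr K z r (SimpleGraph.fromRel
      fun a b : {i : Fin ℓ // i ≠ i₂} =>
        G.Adj ↑a ↑b ∨ ((a : Fin ℓ) = i₁ ∧ G.Adj i₂ ↑b)) with hCArr
  set Z : Submodule K (Fin ℓ → K) := chyp i₁ ⊓ chyp i₂ with hZdef
  have hdisj : Disjoint A' (eset i₁ i₂ z r) := disjoint_eset (G := G) hz hr hne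
  -- Step 1: expand χ(M(G)) as a double sum
  have h1 : chi (monArr K z r G) t
      = ∑ J ∈ A'.powerset, ∑ S ∈ (eset i₁ i₂ z r).powerset,
          (-1 : ℤ) ^ J.card *
            ((-1) ^ S.card * t ^ (Module.finrank K ↥(J.inf id ⊓ S.inf id))) := by
    rw [chi, monArr_split hz hr hadj, sum_powerset_union_disjoint hdisj]
    refine Finset.sum_congr rfl fun J hJ => Finset.sum_congr rfl fun S hS => ?_
    have hd : Disjoint J S :=
      hdisj.mono (Finset.mem_powerset.1 hJ) (Finset.mem_powerset.1 hS)
    rw [Finset.card_union_of_disjoint hd, Finset.inf_union, pow_add]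
    ring
  -- Step 2: the per-k restricted sums each equal χ of the contraction
  have key : ∀ kk ∈ Finset.range r,
      (∑ J ∈ A'.powerset, (-1 : ℤ) ^ J.card *
          t ^ (Module.finrank K ↥(J.inf id ⊓ hyp i₁ i₂ (z ^ (kk + 1)))))
        = chi CArr t := by
    intro kk hkk
    have hkk' : kk < r := Finset.mem_range.1 hkk
    have hcc : (z : K) ^ (r - kk - 1) * z ^ (kk + 1) = 1 := by
      rw [← pow_add]
      have he : r - kk - 1 + (kk + 1) = r := by omega
      rw [he, hz.pow_eq_one]
    have hrange : LinearMap.range (iot i₁ i₂ hne (z ^ (r - kk - 1)))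
        = hyp i₁ i₂ (z ^ (kk + 1)) := range_iot hne _ hcc
    have hstep : ∀ J : Finset (Submodule K (Fin ℓ → K)),
        t ^ (Module.finrank K ↥(J.inf id ⊓ hyp i₁ i₂ (z ^ (kk + 1))))
          = t ^ (Module.finrank K
              ↥((J.image (Submodule.comap (iot i₁ i₂ hne (z ^ (r - kk - 1))))).inf id)) := by
      intro J
      congr 1
      rw [Finset.inf_image]
      have h2 : (id ∘ fun P => Submodule.comap (iot i₁ i₂ hne (z ^ (r - kk - 1))) P)
          = fun P : Submodule K (Fin ℓ → K) =>
              Submodule.comap (iot i₁ i₂ hne (z ^ (r - kk - 1))) P := rfl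
      rw [h2, ← comap_finset_inf, finrank_comap_eq (iot_inj hne _) (J.inf id), hrange]
    rw [Finset.sum_congr rfl fun J _ => by rw [hstep J]]
    rw [sum_powerset_image_collapse A' (Submodule.comap (iot i₁ i₂ hne (z ^ (r - kk - 1))))
      (fun I => t ^ (Module.finrank K ↥(I.inf id)))]
    rw [hA', image_comap hz hr hadj hne hkk', ← hCArr, chi]
  -- Step 3: the Z-terms cancel
  have hzero : ∑ J ∈ A'.powerset,
      (-1 : ℤ) ^ J.card * t ^ (Module.finrank K ↥(J.inf id ⊓ Z)) = 0 := by
    apply sum_powerset_sign_mul_zero A' (chyp i₁)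
    · rw [hA']; exact mem_monArr.2 (Or.inl ⟨i₁, rfl⟩)
    · intro J
      congr 1
      rw [Finset.inf_insert]
      have hZle : Z ≤ chyp i₁ := inf_le_left
      have : (chyp i₁ ⊓ J.inf id) ⊓ Z = J.inf id ⊓ Z := by
        rw [inf_comm (chyp i₁) (J.inf id), inf_assoc, inf_eq_right.2 hZle]
      rw [show (id (chyp i₁) : Submodule K (Fin ℓ → K)) = chyp i₁ from rfl, this]
  -- Step 4: sign sums over big subsets of E
  have hEcard : (eset i₁ i₂ z r : Finset (Submodule K (Fin ℓ → K))).card = r :=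
    eset_card hz hr hne
  have hEne : (eset i₁ i₂ z r : Finset (Submodule K (Fin ℓ → K))) ≠ ∅ := by
    intro h
    rw [h, Finset.card_empty] at hEcard
    omega
  have hsign : ∑ S ∈ (eset i₁ i₂ z r).powerset.filter (fun S => 2 ≤ S.card),
      (-1 : ℤ) ^ S.card = (r : ℤ) - 1 := by
    have h0 : ∑ S ∈ (eset i₁ i₂ z r).powerset, (-1 : ℤ) ^ S.card = 0 := by
      rw [Finset.sum_powerset_neg_one_pow_card, if_neg hEne]
    have hsplit := sum_powerset_card_split (eset i₁ i₂ z r) (fun S => (-1 : ℤ) ^ S.card)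
    simp only [Finset.card_empty, pow_zero, Finset.card_singleton, pow_one,
      Finset.sum_const, hEcard, nsmul_eq_mul, mul_neg, mul_one] at hsplit
    rw [h0] at hsplit
    linarith
  -- Step 5: evaluate the inner sum over subsets of E
  have h2 : ∀ J ∈ A'.powerset,
      ∑ S ∈ (eset i₁ i₂ z r).powerset,
          (-1 : ℤ) ^ S.card * t ^ (Module.finrank K ↥(J.inf id ⊓ S.inf id))
        = t ^ (Module.finrank K ↥(J.inf id))
          - (∑ kk ∈ Finset.range r, t ^ (Module.finrank K ↥(J.inf id ⊓ hyp i₁ i₂ (z ^ (kk + 1)))))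
          + ((r : ℤ) - 1) * t ^ (Module.finrank K ↥(J.inf id ⊓ Z)) := by
    intro J hJ
    rw [sum_powerset_card_split]
    have e1 : ((-1 : ℤ) ^ (∅ : Finset (Submodule K (Fin ℓ → K))).card *
        t ^ (Module.finrank K ↥(J.inf id ⊓ (∅ : Finset (Submodule K (Fin ℓ → K))).inf id)))
        = t ^ (Module.finrank K ↥(J.inf id)) := by
      rw [Finset.card_empty, pow_zero, one_mul, Finset.inf_empty, inf_top_eq]
    have e2 : ∑ a ∈ eset i₁ i₂ z r, (-1 : ℤ) ^ ({a} : Finset _).card *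
        t ^ (Module.finrank K ↥(J.inf id ⊓ ({a} : Finset _).inf id))
        = -(∑ kk ∈ Finset.range r,
            t ^ (Module.finrank K ↥(J.inf id ⊓ hyp i₁ i₂ (z ^ (kk + 1))))) := by
      rw [eset, Finset.sum_image (eset_injOn hz hr hne), ← Finset.sum_neg_distrib]
      refine Finset.sum_congr rfl fun kk hkk => ?_
      rw [Finset.card_singleton, pow_one, Finset.inf_singleton]
      show (-1 : ℤ) * t ^ (Module.finrank K ↥(J.inf id ⊓ id (hyp i₁ i₂ (z ^ (kk + 1))))) = _
      rw [id]
      ring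
    have e3 : ∑ S ∈ (eset i₁ i₂ z r).powerset.filter (fun S => 2 ≤ S.card),
        (-1 : ℤ) ^ S.card * t ^ (Module.finrank K ↥(J.inf id ⊓ S.inf id))
        = ((r : ℤ) - 1) * t ^ (Module.finrank K ↥(J.inf id ⊓ Z)) := by
      rw [← hsign, Finset.sum_mul]
      refine Finset.sum_congr rfl fun S hS => ?_
      rw [Finset.mem_filter, Finset.mem_powerset] at hS
      rw [inf_eset_eq hz hr hne hS.1 hS.2, ← hZdef]
    rw [e1, e2, e3]
    ring
  -- Final assembly
  rw [h1]
  have h3 : ∀ J ∈ A'.powerset,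
      (-1 : ℤ) ^ J.card *
          (∑ S ∈ (eset i₁ i₂ z r).powerset,
            (-1 : ℤ) ^ S.card * t ^ (Module.finrank K ↥(J.inf id ⊓ S.inf id)))
        = ((-1 : ℤ) ^ J.card * t ^ (Module.finrank K ↥(J.inf id)))
          - (∑ kk ∈ Finset.range r, (-1 : ℤ) ^ J.card *
              t ^ (Module.finrank K ↥(J.inf id ⊓ hyp i₁ i₂ (z ^ (kk + 1)))))
          + ((r : ℤ) - 1) *
            ((-1 : ℤ) ^ J.card * t ^ (Module.finrank K ↥(J.inf id ⊓ Z))) := by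
    intro J hJ
    rw [h2 J hJ, ← Finset.mul_sum]
    ring
  have h4 : ∀ J ∈ A'.powerset,
      ∑ S ∈ (eset i₁ i₂ z r).powerset,
          (-1 : ℤ) ^ J.card *
            ((-1) ^ S.card * t ^ (Module.finrank K ↥(J.inf id ⊓ S.inf id)))
        = (-1 : ℤ) ^ J.card *
          (∑ S ∈ (eset i₁ i₂ z r).powerset,
            (-1 : ℤ) ^ S.card * t ^ (Module.finrank K ↥(J.inf id ⊓ S.inf id))) := by
    intro J hJ
    rw [Finset.mul_sum]
  rw [Finset.sum_congr rfl h4, Finset.sum_congr rfl h3]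
  rw [Finset.sum_add_distrib, Finset.sum_sub_distrib, ← Finset.mul_sum, hzero, mul_zero, add_zero]
  rw [Finset.sum_comm]
  rw [Finset.sum_congr rfl key, Finset.sum_const, Finset.card_range, nsmul_eq_mul]
  rw [chi]
  rw [chi]
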